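/- Let K be a real algebraic number field. Then ℘_K, the set of Pisot numbers generating K, is relatively dense in [1, ∞): there exists ρ' > 0 such that every subinterval of [1, ∞) of the form (x, x + ρ'] contains an element of ℘_K. -/

import Mathlib

/-!
The ring of integers of `K` is a full lattice `Λ` in the mixed space `ℝ^r₁ × ℂ^r₂`. Modulo `Λ`,
the ray `t ↦ t • e_w₀` along the coordinate of the real place `w₀ = ι` stays in a bounded
fundamental domain, so finitely many times already come `ε`-close to all of it, and differences
of times give a syndetic set of `r` for which `r • e_w₀` is `½`-close to the image of an
integer `a`. Such an `a` lies within `½` of `r` at `w₀` and has absolute value `< ½` at every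
other place: for `r ≥ 3/2` it is a Pisot number, and it generates `K` because all its other
conjugates have absolute value `< 1`, so none of them equals it.
-/

open IntermediateField

/-- The "identity" embedding of a real number field `K ⊆ ℝ` into `ℂ`. -/
noncomputable def iotaK (K : IntermediateField ℚ ℝ) : ↥K →+* ℂ :=
  Complex.ofRealHom.comp (algebraMap ↥K ℝ)

/-- `℘_K`: the set of Pisot numbers `θ ∈ K` with `ℚ(θ) = K`. -/
def pisotGen (K : IntermediateField ℚ ℝ) : Set ↥K :=
  {θ | IsIntegral ℤ θ ∧ 1 < (θ : ℝ) ∧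
    IntermediateField.adjoin ℚ ({θ} : Set ↥K) = ⊤ ∧
    ∀ σ : ↥K →+* ℂ, σ ≠ iotaK K → ‖σ θ‖ < 1}

theorem Metric.exists_finset_forall_exists_dist_lt {X α : Type*} [PseudoMetricSpace X]
    [ProperSpace X] {f : α → X} (hf : Bornology.IsBounded (Set.range f)) {ε : ℝ} (hε : 0 < ε) :
    ∃ S : Finset α, ∀ a, ∃ s ∈ S, dist (f a) (f s) < ε := by
  have hcover : closure (Set.range f) ⊆ ⋃ s, Metric.ball (f s) ε := fun p hp ↦ by
    obtain ⟨_, ⟨s, rfl⟩, hs⟩ := Metric.mem_closure_iff.mp hp ε hε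
    exact Set.mem_iUnion.mpr ⟨s, Metric.mem_ball.mpr (dist_comm p _ ▸ hs)⟩
  obtain ⟨S, hS⟩ := hf.isCompact_closure.elim_finite_subcover _ (fun _ ↦ Metric.isOpen_ball) hcover
  refine ⟨S, fun a ↦ ?_⟩
  obtain ⟨s, hs, ha⟩ := Set.mem_iUnion₂.mp (hS (subset_closure ⟨a, rfl⟩))
  exact ⟨s, hs, ha⟩

theorem ZSpan.exists_smul_near_span {E ι : Type*} [NormedAddCommGroup E] [NormedSpace ℝ E]
    [Fintype ι] (b : Module.Basis ι ℝ E) (v : E) {ε : ℝ} (hε : 0 < ε) :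
    ∃ T > 0, ∀ x : ℝ, ∃ r ∈ Set.Ioc x (x + T),
      ∃ l ∈ Submodule.span ℤ (Set.range b), dist (r • v) l < ε := by
  have : FiniteDimensional ℝ E := Module.Finite.of_basis b
  have : ProperSpace E := FiniteDimensional.proper_real E
  have hbdd : Bornology.IsBounded (Set.range fun t : ℝ ↦ fract b (t • v)) :=
    (fundamentalDomain_isBounded b).subset (Set.range_subset_iff.mpr fun t ↦
      fract_mem_fundamentalDomain b _)
  obtain ⟨S, hS⟩ := Metric.exists_finset_forall_exists_dist_lt hbdd hε
  set R := ∑ s ∈ S, |s|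
  have hR : 0 ≤ R := Finset.sum_nonneg fun s _ ↦ abs_nonneg s
  refine ⟨2 * R + 1, by linarith, fun x ↦ ?_⟩
  obtain ⟨s, hs, hdist⟩ := hS (x + R + 1)
  have hsR : |s| ≤ R := Finset.single_le_sum (fun s _ ↦ abs_nonneg s) hs
  -- the lattice points cancel in the difference of the two fractional parts
  refine ⟨x + R + 1 - s, ⟨by linarith [le_abs_self s], by linarith [neg_abs_le s]⟩,
    floor b ((x + R + 1) • v) - floor b (s • v), Submodule.sub_mem _ (SetLike.coe_mem _)
      (SetLike.coe_mem _), ?_⟩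
  rwa [fract_apply, fract_apply, dist_eq_norm, sub_sub_sub_comm, ← sub_smul, ← dist_eq_norm]
    at hdist

namespace NumberField.mixedEmbedding

open InfinitePlace

variable {K : Type*} [Field K] [NumberField K]

open scoped Classical in
theorem normAtPlace_le_norm (w : InfinitePlace K) (x : mixedSpace K) :
    normAtPlace w x ≤ ‖x‖ := by
  rw [norm_eq_sup'_normAtPlace]
  exact Finset.le_sup' (fun w ↦ normAtPlace w x) (Finset.mem_univ w)

open scoped Classical in
theorem exists_ringOfIntegers_near_smul (v : mixedSpace K) {ε : ℝ} (hε : 0 < ε) :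
    ∃ T > 0, ∀ x : ℝ, ∃ r ∈ Set.Ioc x (x + T),
      ∃ a : 𝓞 K, ‖r • v - mixedEmbedding K (a : K)‖ < ε := by
  obtain ⟨T, hT, h⟩ := ZSpan.exists_smul_near_span (latticeBasis K) v hε
  refine ⟨T, hT, fun x ↦ ?_⟩
  obtain ⟨r, hr, l, hl, hdist⟩ := h x
  obtain ⟨a, rfl⟩ := (mem_span_latticeBasis K).mp hl
  exact ⟨r, hr, a, by rwa [dist_eq_norm] at hdist⟩

open scoped Classical in
theorem exists_ringOfIntegers_near_at_isReal {w₀ : InfinitePlace K} (hw₀ : w₀.IsReal)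
    {ε : ℝ} (hε : 0 < ε) :
    ∃ T > 0, ∀ x : ℝ, ∃ r ∈ Set.Ioc x (x + T), ∃ a : 𝓞 K,
      |embedding_of_isReal hw₀ a - r| < ε ∧ ∀ w ≠ w₀, w a < ε := by
  obtain ⟨T, hT, h⟩ :=
    exists_ringOfIntegers_near_smul (mixedSpaceOfRealSpace (Pi.single w₀ 1)) hε
  refine ⟨T, hT, fun x ↦ ?_⟩
  obtain ⟨r, hr, a, hnear⟩ := h x
  set y := r • mixedSpaceOfRealSpace (Pi.single w₀ 1) - mixedEmbedding K (a : K)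
  refine ⟨r, hr, a, ?_, fun w hw ↦ ?_⟩
  · have hy : normAtPlace w₀ y = |embedding_of_isReal hw₀ a - r| := by
      rw [normAtPlace_apply_of_isReal hw₀, Real.norm_eq_abs, abs_sub_comm]
      simp [y, mixedSpaceOfRealSpace_apply]
    exact hy ▸ (normAtPlace_le_norm w₀ y).trans_lt hnear
  · have hv : normAtPlace w (mixedSpaceOfRealSpace (Pi.single w₀ (1 : ℝ))) = 0 := by
      rw [normAtPlace_mixedSpaceOfRealSpace] <;> simp [hw]
    calc w a = normAtPlace w (r • mixedSpaceOfRealSpace (Pi.single w₀ 1) - y) := by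
          rw [sub_sub_cancel, normAtPlace_apply]
      _ ≤ normAtPlace w (r • mixedSpaceOfRealSpace (Pi.single w₀ 1)) + normAtPlace w (-y) := by
          rw [sub_eq_add_neg]; exact normAtPlace_add_le w _ _
      _ = normAtPlace w y := by rw [normAtPlace_smul, hv, normAtPlace_neg, mul_zero, zero_add]
      _ < ε := (normAtPlace_le_norm w y).trans_lt hnear

end NumberField.mixedEmbedding

open NumberField NumberField.InfinitePlace

section RealSubfield

variable (K : IntermediateField ℚ ℝ)

instance [FiniteDimensional ℚ K] : NumberField K := ⟨⟩

theorem isReal_iotaK : ComplexEmbedding.IsReal (iotaK K) := by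
  ext x
  exact Complex.conj_ofReal _

theorem embedding_of_isReal_mk_iotaK (x : K) :
    embedding_of_isReal (isReal_mk_iff.mpr (isReal_iotaK K)) x = (x : ℝ) := by
  apply Complex.ofReal_injective
  rw [embedding_of_isReal_apply, embedding_mk_eq_of_isReal (isReal_iotaK K)]
  rfl

theorem eq_iotaK_of_mk_eq_mk {σ : K →+* ℂ}
    (h : InfinitePlace.mk σ = InfinitePlace.mk (iotaK K)) : σ = iotaK K := by
  rcases mk_eq_iff.mp h with h | h
  · exact h
  · rw [← star_star σ]
    exact (congrArg star h).trans (isReal_iotaK K)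

theorem mem_pisotGen_of_infinitePlace_lt [FiniteDimensional ℚ K] (a : 𝓞 K)
    (h₁ : 1 < ((a : K) : ℝ)) (h₂ : ∀ w ≠ InfinitePlace.mk (iotaK K), w a < 1) :
    (a : K) ∈ pisotGen K := by
  have ha : a ≠ 0 := by
    rintro rfl
    norm_num at h₁
  refine ⟨a.isIntegral_coe, h₁,
    is_primitive_element_of_infinitePlace_lt ha h₂
      (.inl (isReal_mk_iff.mpr (isReal_iotaK K))), fun σ hσ ↦ ?_⟩
  exact h₂ _ (mt (eq_iotaK_of_mk_eq_mk K) hσ)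

end RealSubfield

/-- `℘_K` is relatively dense in `[1, ∞)`: there is `ρ' > 0` such that every interval
`(x, x + ρ']` with `x ≥ 1` contains an element of `℘_K`. -/
theorem pisotGen_relDense (K : IntermediateField ℚ ℝ) [FiniteDimensional ℚ K] :
    ∃ ρ' : ℝ, 0 < ρ' ∧ ∀ x : ℝ, 1 ≤ x →
      ∃ θ ∈ pisotGen K, x < (θ : ℝ) ∧ (θ : ℝ) ≤ x + ρ' := by
  obtain ⟨T, hT, hnear⟩ := mixedEmbedding.exists_ringOfIntegers_near_at_isReal
    (isReal_mk_iff.mpr (isReal_iotaK K)) one_half_pos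
  refine ⟨T + 1, by linarith, fun x hx ↦ ?_⟩
  obtain ⟨r, ⟨hxr, hrT⟩, a, hreal, hsmall⟩ := hnear (x + 1 / 2)
  rw [embedding_of_isReal_mk_iotaK, abs_lt] at hreal
  have hxa : x < ((a : K) : ℝ) := by linarith
  refine ⟨a, mem_pisotGen_of_infinitePlace_lt K a (by linarith)
    (fun w hw ↦ (hsmall w hw).trans one_half_lt_one), hxa, by linarith⟩
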